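/- arXiv:2010.06793 — 7 statements merged into one kernel-verified Lean document; each statement's English description precedes it below -/
import Mathlib

section
/- Let H be a complex Hilbert space, let U_1, …, U_J be closed subspaces of H, let P_i : H → H denote the orthogonal projection onto U_i, and set P = Σ_{i=1}^J P_i. Assume: (strengthened Cauchy–Schwarz) there exists β > 0 such that for every choice of u_i ∈ U_i and v_j ∈ U_j, Σ_{i=1}^J Σ_{j=1}^J |⟪u_i, v_j⟫| ≤ β (Σ_{i=1}^J ‖u_i‖²)^{1/2} (Σ_{j=1}^J ‖v_j‖²)^{1/2}; and (stable decomposition) there exists α > 0 such that every u ∈ H admits a decomposition u = Σ_{i=1}^J u_i with u_i ∈ U_i and Σ_{i=1}^J ‖u_i‖² ≤ α^{-1} ‖u‖². Then for every u ∈ H, α ‖u‖² ≤ Re⟪P u, u⟫ ≤ β ‖u‖². -/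
/-!
Write `S = ∑ ‖Pᵢ u‖²`; since each `Pᵢ` is an orthogonal projection, `Re⟪P u, u⟫ = S`.
For the lower bound, test `u = ∑ wᵢ` from the stable decomposition against the projections:
`‖u‖² = ∑ Re⟪Pᵢ u, wᵢ⟫ ≤ √S (∑ ‖wᵢ‖²)^{1/2} ≤ √S α^{-1/2} ‖u‖`.
For the upper bound, the strengthened Cauchy–Schwarz inequality gives `‖P u‖² ≤ β S`, and
`S = Re⟪P u, u⟫ ≤ ‖P u‖ ‖u‖ ≤ √(β S) ‖u‖`.
-/

open Finset RCLike

open scoped InnerProductSpace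

lemma le_of_sq_le_mul_self {a b : ℝ} (hb : 0 ≤ b) (h : a ^ 2 ≤ b * a) : a ≤ b := by
  nlinarith

section

variable {𝕜 E ι : Type*} [RCLike 𝕜] [NormedAddCommGroup E] [InnerProductSpace 𝕜 E] [Fintype ι]

lemma re_inner_eq_norm_sq_of_inner_eq {K : Submodule 𝕜 E} {p u : E} (hp : p ∈ K)
    (hproj : ∀ v ∈ K, ⟪p, v⟫_𝕜 = ⟪u, v⟫_𝕜) : re ⟪p, u⟫_𝕜 = ‖p‖ ^ 2 := by
  rw [inner_re_symm, ← hproj p hp, inner_self_eq_norm_sq]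

lemma sq_norm_sq_le_of_eq_sum {U : ι → Submodule 𝕜 E} {u : E} {p w : ι → E}
    (hproj : ∀ i, ∀ v ∈ U i, ⟪p i, v⟫_𝕜 = ⟪u, v⟫_𝕜) (hw : ∀ i, w i ∈ U i) (hu : u = ∑ i, w i) :
    (‖u‖ ^ 2) ^ 2 ≤ (∑ i, ‖p i‖ ^ 2) * ∑ i, ‖w i‖ ^ 2 := by
  have hsum : ‖u‖ ^ 2 ≤ ∑ i, ‖p i‖ * ‖w i‖ :=
    calc ‖u‖ ^ 2 = re ⟪u, ∑ i, w i⟫_𝕜 := by rw [← hu, inner_self_eq_norm_sq]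
      _ = ∑ i, re ⟪p i, w i⟫_𝕜 := by
        simp only [inner_sum, map_sum, hproj _ _ (hw _)]
      _ ≤ ∑ i, ‖p i‖ * ‖w i‖ := sum_le_sum fun i _ => re_inner_le_norm _ _
  calc (‖u‖ ^ 2) ^ 2 ≤ (∑ i, ‖p i‖ * ‖w i‖) ^ 2 := by gcongr
    _ ≤ _ := sum_mul_sq_le_sq_mul_sq _ _ _

lemma norm_sum_sq_le_of_sum_sum_norm_inner_le {x : ι → E} {β : ℝ}
    (h : ∑ i, ∑ j, ‖⟪x i, x j⟫_𝕜‖ ≤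
      β * √(∑ i, ‖x i‖ ^ 2) * √(∑ j, ‖x j‖ ^ 2)) :
    ‖∑ i, x i‖ ^ 2 ≤ β * ∑ i, ‖x i‖ ^ 2 :=
  calc ‖∑ i, x i‖ ^ 2 = ∑ i, ∑ j, re ⟪x i, x j⟫_𝕜 := by
        rw [← inner_self_eq_norm_sq (𝕜 := 𝕜)]
        simp only [sum_inner, inner_sum, map_sum]
        exact sum_comm
    _ ≤ ∑ i, ∑ j, ‖⟪x i, x j⟫_𝕜‖ :=
        sum_le_sum fun i _ => sum_le_sum fun j _ => re_le_norm _
    _ ≤ β * ∑ i, ‖x i‖ ^ 2 := by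
        rwa [mul_assoc, Real.mul_self_sqrt (sum_nonneg fun i _ => sq_nonneg _)] at h

end

theorem stmt_0_general
    {H : Type*} [NormedAddCommGroup H] [InnerProductSpace ℂ H]
    (J : ℕ) (U : Fin J → Submodule ℂ H)
    (P : Fin J → (H →L[ℂ] H))
    (hPmem : ∀ i (u : H), P i u ∈ U i)
    (hPproj : ∀ i (u : H), ∀ v ∈ U i, (inner ℂ (P i u) v : ℂ) = inner ℂ u v)
    (α β : ℝ) (hα : 0 < α) (hβ : 0 < β)
    (hCS : ∀ u v : Fin J → H, (∀ i, u i ∈ U i) → (∀ j, v j ∈ U j) →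
      ∑ i, ∑ j, ‖(inner ℂ (u i) (v j) : ℂ)‖ ≤
        β * Real.sqrt (∑ i, ‖u i‖ ^ 2) * Real.sqrt (∑ j, ‖v j‖ ^ 2))
    (hSD : ∀ u : H, ∃ w : Fin J → H, (∀ i, w i ∈ U i) ∧ u = ∑ i, w i ∧
      ∑ i, ‖w i‖ ^ 2 ≤ α⁻¹ * ‖u‖ ^ 2) :
    ∀ u : H, α * ‖u‖ ^ 2 ≤ (inner ℂ ((∑ i, P i) u) u : ℂ).re ∧
      (inner ℂ ((∑ i, P i) u) u : ℂ).re ≤ β * ‖u‖ ^ 2 := by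
  intro u
  set S := ∑ i, ‖P i u‖ ^ 2
  have hS : 0 ≤ S := sum_nonneg fun i _ => sq_nonneg _
  have hre : (⟪(∑ i, P i) u, u⟫_ℂ).re = S := by
    simp only [_root_.sum_apply, sum_inner, Complex.re_sum, S]
    exact sum_congr rfl fun i _ =>
      re_inner_eq_norm_sq_of_inner_eq (hPmem i u) (hPproj i u)
  rw [hre]
  constructor
  · obtain ⟨w, hw, hu, hw_le⟩ := hSD u
    have hdecomp := sq_norm_sq_le_of_eq_sum (hPproj · u) hw hu
    refine le_of_sq_le_mul_self hS ?_
    calc (α * ‖u‖ ^ 2) ^ 2 = α ^ 2 * (‖u‖ ^ 2) ^ 2 := by ring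
      _ ≤ α ^ 2 * (S * (α⁻¹ * ‖u‖ ^ 2)) := by
          gcongr
          exact hdecomp.trans (mul_le_mul_of_nonneg_left hw_le hS)
      _ = S * (α * ‖u‖ ^ 2) := by field_simp
  · have hnorm : ‖∑ i, P i u‖ ^ 2 ≤ β * S :=
      norm_sum_sq_le_of_sum_sum_norm_inner_le (hCS _ _ (hPmem · u) (hPmem · u))
    have hS_le : S ≤ ‖∑ i, P i u‖ * ‖u‖ := by
      rw [← hre, _root_.sum_apply]
      exact re_inner_le_norm (𝕜 := ℂ) _ _
    refine le_of_sq_le_mul_self (by positivity) ?_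
    calc S ^ 2 ≤ ‖∑ i, P i u‖ ^ 2 * ‖u‖ ^ 2 := by rw [← mul_pow]; gcongr
      _ ≤ β * S * ‖u‖ ^ 2 := by gcongr
      _ = β * ‖u‖ ^ 2 * S := by ring

/-- Subspace correction theorem (Xu): under the strengthened Cauchy–Schwarz
inequality and the stable decomposition assumption, the sum of orthogonal
projections `P = ∑ i, P i` onto the closed subspaces `U i` satisfies
`α ‖u‖² ≤ Re⟪P u, u⟫ ≤ β ‖u‖²`. -/
theorem stmt_0
    {H : Type*} [NormedAddCommGroup H] [InnerProductSpace ℂ H] [CompleteSpace H]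
    (J : ℕ) (U : Fin J → Submodule ℂ H) (hU : ∀ i, IsClosed ((U i : Set H)))
    (P : Fin J → (H →L[ℂ] H))
    (hPmem : ∀ i (u : H), P i u ∈ U i)
    (hPproj : ∀ i (u : H), ∀ v ∈ U i, (inner ℂ (P i u) v : ℂ) = inner ℂ u v)
    (α β : ℝ) (hα : 0 < α) (hβ : 0 < β)
    (hCS : ∀ u v : Fin J → H, (∀ i, u i ∈ U i) → (∀ j, v j ∈ U j) →
      ∑ i, ∑ j, ‖(inner ℂ (u i) (v j) : ℂ)‖ ≤
        β * Real.sqrt (∑ i, ‖u i‖ ^ 2) * Real.sqrt (∑ j, ‖v j‖ ^ 2))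
    (hSD : ∀ u : H, ∃ w : Fin J → H, (∀ i, w i ∈ U i) ∧ u = ∑ i, w i ∧
      ∑ i, ‖w i‖ ^ 2 ≤ α⁻¹ * ‖u‖ ^ 2) :
    ∀ u : H, α * ‖u‖ ^ 2 ≤ (inner ℂ ((∑ i, P i) u) u : ℂ).re ∧
      (inner ℂ ((∑ i, P i) u) u : ℂ).re ≤ β * ‖u‖ ^ 2 :=
  stmt_0_general J U P hPmem hPproj α β hα hβ hCS hSD
end

section
/- Let H be a complex Hilbert space, let U_1, …, U_J be closed subspaces of H, let P_i : H → H denote the orthogonal projection onto U_i, and set P = Σ_{i=1}^J P_i. If there exists β > 0 such that for every choice of u_i ∈ U_i and v_j ∈ U_j one has Σ_{i=1}^J Σ_{j=1}^J |⟪u_i, v_j⟫| ≤ β (Σ_{i=1}^J ‖u_i‖²)^{1/2} (Σ_{j=1}^J ‖v_j‖²)^{1/2}, then Re⟪P u, u⟫ ≤ β ‖u‖² for every u ∈ H. -/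
/-!
Write `S = ∑ i, ‖P i u‖²` and `w = ∑ i, P i u`. Since `⟪u, P i u⟫ = ‖P i u‖²`, both
`Re⟪P u, u⟫` and `Re⟪u, w⟫` equal `S`, so `S ≤ ‖u‖ ‖w‖`. Expanding `‖w‖²` as a double sum
of inner products and applying the strengthened Cauchy–Schwarz inequality to `u_i = v_i = P i u`
gives `‖w‖² ≤ β S`. Hence `S² ≤ ‖u‖² β S`, i.e. `S ≤ β ‖u‖²`.
-/

open RCLike

section InnerProductSpace

variable {𝕜 E : Type*} [RCLike 𝕜] [NormedAddCommGroup E] [InnerProductSpace 𝕜 E]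

theorem re_inner_apply_self_of_proj {K : Submodule 𝕜 E} {p : E → E} (u : E)
    (hmem : p u ∈ K) (hproj : ∀ v ∈ K, inner 𝕜 (p u) v = inner 𝕜 u v) :
    re (inner 𝕜 u (p u)) = ‖p u‖ ^ 2 := by
  rw [← hproj _ hmem, inner_self_eq_norm_sq]

theorem norm_sum_sq_le_sum_sum_norm_inner {ι : Type*} (s : Finset ι) (x : ι → E) :
    ‖∑ i ∈ s, x i‖ ^ 2 ≤ ∑ i ∈ s, ∑ j ∈ s, ‖inner 𝕜 (x i) (x j)‖ := by
  rw [← inner_self_eq_norm_sq (𝕜 := 𝕜), sum_inner, map_sum]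
  gcongr with i
  rw [inner_sum, map_sum]
  gcongr with j
  exact re_le_norm _

theorem sum_norm_sq_le_of_sum_norm_inner_le {ι : Type*} (s : Finset ι) (x : ι → E) (u : E)
    (hx : ∀ i ∈ s, re (inner 𝕜 u (x i)) = ‖x i‖ ^ 2) {β : ℝ} (hβ : 0 ≤ β)
    (hCS : ∑ i ∈ s, ∑ j ∈ s, ‖inner 𝕜 (x i) (x j)‖ ≤ β * ∑ i ∈ s, ‖x i‖ ^ 2) :
    ∑ i ∈ s, ‖x i‖ ^ 2 ≤ β * ‖u‖ ^ 2 := by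
  set S := ∑ i ∈ s, ‖x i‖ ^ 2
  have hS : 0 ≤ S := by positivity
  have hw : ‖∑ i ∈ s, x i‖ ^ 2 ≤ β * S := (norm_sum_sq_le_sum_sum_norm_inner s x).trans hCS
  have hSu : S ≤ ‖u‖ * ‖∑ i ∈ s, x i‖ :=
    calc S = re (inner 𝕜 u (∑ i ∈ s, x i)) := by
          rw [inner_sum, map_sum]; exact (Finset.sum_congr rfl hx).symm
      _ ≤ ‖inner 𝕜 u (∑ i ∈ s, x i)‖ := re_le_norm _
      _ ≤ ‖u‖ * ‖∑ i ∈ s, x i‖ := norm_inner_le_norm _ _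
  have hSS : S * S ≤ S * (β * ‖u‖ ^ 2) :=
    calc S * S ≤ (‖u‖ * ‖∑ i ∈ s, x i‖) ^ 2 := by rw [← sq]; gcongr
      _ = ‖u‖ ^ 2 * ‖∑ i ∈ s, x i‖ ^ 2 := by ring
      _ ≤ ‖u‖ ^ 2 * (β * S) := by gcongr
      _ = S * (β * ‖u‖ ^ 2) := by ring
  rcases hS.eq_or_lt with hS0 | hSpos
  · rw [← hS0]; positivity
  · exact le_of_mul_le_mul_left hSS hSpos

end InnerProductSpace

theorem stmt_1_general
    {H : Type*} [NormedAddCommGroup H] [InnerProductSpace ℂ H]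
    (J : ℕ) (U : Fin J → Submodule ℂ H)
    (P : Fin J → (H →L[ℂ] H))
    (hPmem : ∀ i (u : H), P i u ∈ U i)
    (hPproj : ∀ i (u : H), ∀ v ∈ U i, (inner ℂ (P i u) v : ℂ) = inner ℂ u v)
    (β : ℝ) (hβ : 0 < β)
    (hCS : ∀ u v : Fin J → H, (∀ i, u i ∈ U i) → (∀ j, v j ∈ U j) →
      ∑ i, ∑ j, ‖(inner ℂ (u i) (v j) : ℂ)‖ ≤
        β * Real.sqrt (∑ i, ‖u i‖ ^ 2) * Real.sqrt (∑ j, ‖v j‖ ^ 2)) :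
    ∀ u : H, (inner ℂ ((∑ i, P i) u) u : ℂ).re ≤ β * ‖u‖ ^ 2 := by
  intro u
  have hP : ∀ i ∈ Finset.univ, re (inner ℂ u (P i u)) = ‖P i u‖ ^ 2 := fun i _ =>
    re_inner_apply_self_of_proj u (hPmem i u) (hPproj i u)
  have hCSu := hCS (fun i => P i u) (fun i => P i u) (hPmem · u) (hPmem · u)
  rw [mul_assoc, Real.mul_self_sqrt (by positivity)] at hCSu
  calc (inner ℂ ((∑ i, P i) u) u).re = ∑ i, ‖P i u‖ ^ 2 := by
        rw [_root_.sum_apply, sum_inner, Complex.re_sum]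
        exact Finset.sum_congr rfl fun i hi => (inner_re_symm _ _).trans (hP i hi)
    _ ≤ β * ‖u‖ ^ 2 := sum_norm_sq_le_of_sum_norm_inner_le _ _ u hP hβ.le hCSu

/-- Upper-bound half of the subspace correction theorem: the strengthened
Cauchy–Schwarz inequality implies `Re⟪P u, u⟫ ≤ β ‖u‖²` for
`P = ∑ i, P i` the sum of orthogonal projections onto closed subspaces. -/
theorem stmt_1
    {H : Type*} [NormedAddCommGroup H] [InnerProductSpace ℂ H] [CompleteSpace H]
    (J : ℕ) (U : Fin J → Submodule ℂ H) (hU : ∀ i, IsClosed ((U i : Set H)))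
    (P : Fin J → (H →L[ℂ] H))
    (hPmem : ∀ i (u : H), P i u ∈ U i)
    (hPproj : ∀ i (u : H), ∀ v ∈ U i, (inner ℂ (P i u) v : ℂ) = inner ℂ u v)
    (β : ℝ) (hβ : 0 < β)
    (hCS : ∀ u v : Fin J → H, (∀ i, u i ∈ U i) → (∀ j, v j ∈ U j) →
      ∑ i, ∑ j, ‖(inner ℂ (u i) (v j) : ℂ)‖ ≤
        β * Real.sqrt (∑ i, ‖u i‖ ^ 2) * Real.sqrt (∑ j, ‖v j‖ ^ 2)) :
    ∀ u : H, (inner ℂ ((∑ i, P i) u) u : ℂ).re ≤ β * ‖u‖ ^ 2 :=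
  stmt_1_general J U P hPmem hPproj β hβ hCS
end

section
/- Let H be a complex Hilbert space, let U_1, …, U_J be closed subspaces of H, let P_i : H → H denote the orthogonal projection onto U_i, and set P = Σ_{i=1}^J P_i. If there exists α > 0 such that every u ∈ H admits a decomposition u = Σ_{i=1}^J u_i with u_i ∈ U_i and Σ_{i=1}^J ‖u_i‖² ≤ α^{-1} ‖u‖², then α ‖u‖² ≤ Re⟪P u, u⟫ for every u ∈ H. -/
/-!
Since each `P i` is an orthogonal projection, `Re⟪P u, u⟫ = ∑ ‖P i u‖²`. Testing a stable
decomposition `u = ∑ uᵢ` against `u` gives `‖u‖² = ∑ Re⟪P i u, uᵢ⟫ ≤ ∑ ‖P i u‖ ‖uᵢ‖`, and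
Cauchy–Schwarz together with `∑ ‖uᵢ‖² ≤ α⁻¹ ‖u‖²` yields `‖u‖⁴ ≤ α⁻¹ ‖u‖² ∑ ‖P i u‖²`.
-/

open Finset RCLike

section InnerProduct

variable {𝕜 E : Type*} [RCLike 𝕜] [NormedAddCommGroup E] [InnerProductSpace 𝕜 E]

lemma re_inner_eq_norm_sq_of_inner_self_eq {x y : E} (h : inner 𝕜 x x = inner 𝕜 y x) :
    re (inner 𝕜 x y) = ‖x‖ ^ 2 := by
  rw [← inner_conj_symm, conj_re, ← h, inner_self_eq_norm_sq]

lemma norm_sq_le_sum_norm_mul_norm {ι : Type*} (s : Finset ι) {u : E} {p w : ι → E}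
    (hu : u = ∑ i ∈ s, w i) (hp : ∀ i ∈ s, inner 𝕜 (p i) (w i) = inner 𝕜 u (w i)) :
    ‖u‖ ^ 2 ≤ ∑ i ∈ s, ‖p i‖ * ‖w i‖ := by
  calc ‖u‖ ^ 2 = re (inner 𝕜 u u) := (inner_self_eq_norm_sq u).symm
    _ = ∑ i ∈ s, re (inner 𝕜 (p i) (w i)) := by
        conv_lhs => enter [2, 3]; rw [hu]
        rw [inner_sum, map_sum]
        exact sum_congr rfl fun i hi => by rw [hp i hi]
    _ ≤ ∑ i ∈ s, ‖p i‖ * ‖w i‖ :=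
        sum_le_sum fun i _ => (re_le_norm _).trans (norm_inner_le_norm _ _)

end InnerProduct

lemma mul_le_sum_sq_of_le_sum_mul {ι : Type*} (s : Finset ι) {x y : ι → ℝ} {c α : ℝ}
    (hα : 0 < α) (hc : 0 ≤ c) (hxy : c ≤ ∑ i ∈ s, x i * y i)
    (hy : ∑ i ∈ s, y i ^ 2 ≤ α⁻¹ * c) :
    α * c ≤ ∑ i ∈ s, x i ^ 2 := by
  have hx : 0 ≤ ∑ i ∈ s, x i ^ 2 := sum_nonneg fun i _ => sq_nonneg _
  have hsq : c * c ≤ (∑ i ∈ s, x i ^ 2) * (α⁻¹ * c) :=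
    calc c * c ≤ (∑ i ∈ s, x i * y i) ^ 2 := by nlinarith
      _ ≤ (∑ i ∈ s, x i ^ 2) * ∑ i ∈ s, y i ^ 2 := sum_mul_sq_le_sq_mul_sq s x y
      _ ≤ (∑ i ∈ s, x i ^ 2) * (α⁻¹ * c) := mul_le_mul_of_nonneg_left hy hx
  rcases hc.eq_or_lt with rfl | hc
  · simpa using hx
  · have : c ≤ (∑ i ∈ s, x i ^ 2) * α⁻¹ := le_of_mul_le_mul_right (by linarith) hc
    rwa [le_mul_inv_iff₀ hα, mul_comm] at this

theorem stmt_2_general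
    {H : Type*} [NormedAddCommGroup H] [InnerProductSpace ℂ H]
    (J : ℕ) (U : Fin J → Submodule ℂ H)
    (P : Fin J → (H →L[ℂ] H))
    (hPmem : ∀ i (u : H), P i u ∈ U i)
    (hPproj : ∀ i (u : H), ∀ v ∈ U i, (inner ℂ (P i u) v : ℂ) = inner ℂ u v)
    (α : ℝ) (hα : 0 < α)
    (hSD : ∀ u : H, ∃ w : Fin J → H, (∀ i, w i ∈ U i) ∧ u = ∑ i, w i ∧
      ∑ i, ‖w i‖ ^ 2 ≤ α⁻¹ * ‖u‖ ^ 2) :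
    ∀ u : H, α * ‖u‖ ^ 2 ≤ (inner ℂ ((∑ i, P i) u) u : ℂ).re := by
  intro u
  obtain ⟨w, hw, hu, hstable⟩ := hSD u
  have hre : (inner ℂ ((∑ i, P i) u) u : ℂ).re = ∑ i, ‖P i u‖ ^ 2 := by
    rw [_root_.sum_apply, sum_inner, Complex.re_sum]
    exact sum_congr rfl fun i _ =>
      re_inner_eq_norm_sq_of_inner_self_eq (hPproj i u _ (hPmem i u))
  rw [hre]
  exact mul_le_sum_sq_of_le_sum_mul _ hα (sq_nonneg _)
    (norm_sq_le_sum_norm_mul_norm _ hu fun i _ => hPproj i u _ (hw i)) hstable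

/-- Lower-bound half of the subspace correction theorem (Lions' lemma): the
stable decomposition assumption implies `α ‖u‖² ≤ Re⟪P u, u⟫` for
`P = ∑ i, P i` the sum of orthogonal projections onto closed subspaces. -/
theorem stmt_2
    {H : Type*} [NormedAddCommGroup H] [InnerProductSpace ℂ H] [CompleteSpace H]
    (J : ℕ) (U : Fin J → Submodule ℂ H) (hU : ∀ i, IsClosed ((U i : Set H)))
    (P : Fin J → (H →L[ℂ] H))
    (hPmem : ∀ i (u : H), P i u ∈ U i)
    (hPproj : ∀ i (u : H), ∀ v ∈ U i, (inner ℂ (P i u) v : ℂ) = inner ℂ u v)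
    (α : ℝ) (hα : 0 < α)
    (hSD : ∀ u : H, ∃ w : Fin J → H, (∀ i, w i ∈ U i) ∧ u = ∑ i, w i ∧
      ∑ i, ‖w i‖ ^ 2 ≤ α⁻¹ * ‖u‖ ^ 2) :
    ∀ u : H, α * ‖u‖ ^ 2 ≤ (inner ℂ ((∑ i, P i) u) u : ℂ).re :=
  stmt_2_general J U P hPmem hPproj α hα hSD
end

section
/- Let H be a complex inner product space, let U_1, …, U_J be subspaces of H, and suppose there is a symmetric relation ~ on {1, …, J} such that: (a) whenever i is not related to j, one has ⟪u_i, v_j⟫ = 0 for all u_i ∈ U_i and v_j ∈ U_j; and (b) for each i, the set { j : i ~ j } has cardinality at most r. Then for every choice of u_i ∈ U_i and v_j ∈ U_j, Σ_{i=1}^J Σ_{j=1}^J |⟪u_i, v_j⟫| ≤ r (Σ_{i=1}^J ‖u_i‖²)^{1/2} (Σ_{j=1}^J ‖v_j‖²)^{1/2}. -/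
open Finset

section FiniteOverlap

variable {ι : Type*} [Fintype ι] {rel : ι → ι → Prop} [DecidableRel rel] {r : ℕ}

lemma sum_sum_ite_rel_le (hcard : ∀ i, #{j | rel i j} ≤ r) {a : ι → ℝ} (ha : ∀ i, 0 ≤ a i) :
    ∑ i, ∑ j, (if rel i j then a i else 0) ≤ r * ∑ i, a i := by
  rw [mul_sum]
  refine sum_le_sum fun i _ => ?_
  rw [sum_ite, sum_const_zero, add_zero, sum_const, nsmul_eq_mul]
  exact mul_le_mul_of_nonneg_right (by exact_mod_cast hcard i) (ha i)

/-- Cauchy–Schwarz over the pairs `(i, j)` with `rel i j`: every `i` occurs in at most `r` of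
them as first and, by symmetry, as second coordinate. -/
theorem sum_sum_ite_rel_mul_le (hsymm : ∀ i j, rel i j → rel j i)
    (hcard : ∀ i, #{j | rel i j} ≤ r) (a b : ι → ℝ) :
    ∑ i, ∑ j, (if rel i j then a i * b j else 0) ≤
      r * √(∑ i, a i ^ 2) * √(∑ j, b j ^ 2) := by
  have hrow : ∑ i, ∑ j, (if rel i j then a i ^ 2 else 0) ≤ r * ∑ i, a i ^ 2 :=
    sum_sum_ite_rel_le hcard fun i => sq_nonneg (a i)
  have hcol : ∑ i, ∑ j, (if rel i j then b j ^ 2 else 0) ≤ r * ∑ j, b j ^ 2 := by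
    have hrel : ∀ i j, rel i j ↔ rel j i := fun i j => ⟨hsymm i j, hsymm j i⟩
    rw [sum_comm]
    simp only [hrel]
    exact sum_sum_ite_rel_le hcard fun j => sq_nonneg (b j)
  calc ∑ i, ∑ j, (if rel i j then a i * b j else 0)
      = ∑ p : ι × ι, (if rel p.1 p.2 then a p.1 else 0) * (if rel p.1 p.2 then b p.2 else 0) := by
        rw [← univ_product_univ, sum_product]
        simp only [ite_zero_mul_ite_zero, and_self]
    _ ≤ √(∑ p : ι × ι, (if rel p.1 p.2 then a p.1 else 0) ^ 2) *
          √(∑ p : ι × ι, (if rel p.1 p.2 then b p.2 else 0) ^ 2) :=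
        Real.sum_mul_le_sqrt_mul_sqrt _ _ _
    _ ≤ √(r * ∑ i, a i ^ 2) * √(r * ∑ j, b j ^ 2) := by
        simp only [ite_pow, ne_eq, OfNat.ofNat_ne_zero, not_false_eq_true, zero_pow,
          ← univ_product_univ, sum_product]
        gcongr
    _ = r * √(∑ i, a i ^ 2) * √(∑ j, b j ^ 2) := by
        rw [Real.sqrt_mul (Nat.cast_nonneg r), Real.sqrt_mul (Nat.cast_nonneg r)]
        rw [mul_mul_mul_comm, Real.mul_self_sqrt (Nat.cast_nonneg r), mul_assoc]

end FiniteOverlap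

/-- Strengthened Cauchy–Schwarz inequality for subspaces with a finite-overlap
orthogonality structure: if subspaces associated to non-related indices are
mutually orthogonal and each index is related to at most `r` indices, then
`∑ᵢ∑ⱼ |⟪u i, v j⟫| ≤ r (∑ᵢ‖u i‖²)^{1/2} (∑ⱼ‖v j‖²)^{1/2}`. -/
theorem stmt_6
    {H : Type*} [NormedAddCommGroup H] [InnerProductSpace ℂ H]
    (J r : ℕ) (U : Fin J → Submodule ℂ H)
    (rel : Fin J → Fin J → Prop) (hsymm : ∀ i j, rel i j → rel j i)
    (horth : ∀ i j, ¬ rel i j → ∀ ui ∈ U i, ∀ vj ∈ U j, (inner ℂ ui vj : ℂ) = 0)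
    (hcard : ∀ i, ({j | rel i j} : Set (Fin J)).ncard ≤ r) :
    ∀ u v : Fin J → H, (∀ i, u i ∈ U i) → (∀ j, v j ∈ U j) →
      ∑ i, ∑ j, ‖(inner ℂ (u i) (v j) : ℂ)‖ ≤
        (r : ℝ) * Real.sqrt (∑ i, ‖u i‖ ^ 2) * Real.sqrt (∑ j, ‖v j‖ ^ 2) := by
  classical
  intro u v hu hv
  have hcard' : ∀ i, #{j | rel i j} ≤ r := fun i => by
    rw [← Set.ncard_coe_finset, coe_filter_univ]
    exact hcard i
  have hterm : ∀ i j, ‖(inner ℂ (u i) (v j) : ℂ)‖ ≤ if rel i j then ‖u i‖ * ‖v j‖ else 0 := by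
    intro i j
    split_ifs with hij
    · exact norm_inner_le_norm _ _
    · rw [horth i j hij _ (hu i) _ (hv j), norm_zero]
  calc ∑ i, ∑ j, ‖(inner ℂ (u i) (v j) : ℂ)‖
      ≤ ∑ i, ∑ j, (if rel i j then ‖u i‖ * ‖v j‖ else 0) :=
        sum_le_sum fun i _ => sum_le_sum fun j _ => hterm i j
    _ ≤ _ := sum_sum_ite_rel_mul_le hsymm hcard' _ _
end

section
/- Let (Ω, μ) be a measure space, let J be a positive integer, and let Φ_1, …, Φ_J : Ω → ℝ be measurable functions with 0 ≤ Φ_j ≤ 1 pointwise and Σ_{j=1}^J Φ_j(x) = 1 for μ-a.e. x. Let Ω_1, …, Ω_J ⊆ Ω be measurable sets such that Φ_j vanishes a.e. outside Ω_j, and suppose there is a positive integer r with Σ_{j=1}^J χ_{Ω_j}(x) ≤ r for μ-a.e. x (finite overlap). Let S be a closed subspace of L²(μ), let P : L²(μ) → L²(μ) be the orthogonal projection onto S, and let u ∈ S. Define u_j := P(Φ_j · u). Then Σ_{j=1}^J u_j = u and Σ_{j=1}^J ‖u_j‖²_{L²(μ)} ≤ r ‖u‖²_{L²(μ)}. -/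
/-! Since `∑ Φ_j = 1` a.e., the functions `Φ_j · u` add up to `u`, which `P` fixes. As `P` is a
contraction, it suffices to bound `∑ ‖Φ_j · u‖²`, and pointwise `Φ_j² ≤ χ_{Ω_j}` gives
`∑ |Φ_j u|² ≤ (∑ χ_{Ω_j}) |u|² ≤ r |u|²`. -/

open MeasureTheory

theorem sq_le_indicator_one {α : Type*} {s : Set α} {x : α} {a : ℝ} (h0 : 0 ≤ a) (h1 : a ≤ 1)
    (hs : x ∉ s → a = 0) : a ^ 2 ≤ s.indicator (fun _ => (1 : ℝ)) x := by
  by_cases hx : x ∈ s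
  · rw [Set.indicator_of_mem hx]
    nlinarith
  · simp [Set.indicator_of_notMem hx, hs hx]

namespace MeasureTheory.Lp

variable {Ω ι : Type*} [MeasurableSpace Ω] {μ : Measure Ω} [Fintype ι]

theorem norm_sq_eq_integral_norm_sq {F : Type*} [NormedAddCommGroup F] (f : Lp F 2 μ) :
    ‖f‖ ^ 2 = ∫ x, ‖f x‖ ^ 2 ∂μ := by
  have hint : 0 ≤ ∫ x, ‖f x‖ ^ 2 ∂μ := integral_nonneg fun x => by positivity
  rw [Lp.norm_def, (Lp.memLp f).eLpNorm_eq_integral_rpow_norm two_ne_zero ENNReal.ofNat_ne_top]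
  simp only [ENNReal.toReal_ofNat, Real.rpow_two]
  rw [ENNReal.toReal_ofReal (by positivity), ← Real.rpow_natCast, ← Real.rpow_mul hint]
  norm_num

theorem sum_eq_of_ae_sum_eq_one {p : ENNReal} {Φ : ι → Ω → ℝ} (hsum : ∀ᵐ x ∂μ, ∑ j, Φ j x = 1)
    {u : Lp ℂ p μ} {w : ι → Lp ℂ p μ} (hw : ∀ j, w j =ᵐ[μ] fun x => (Φ j x : ℂ) * u x) :
    ∑ j, w j = u := by
  apply Lp.ext
  filter_upwards [Lp.coeFn_fun_finsetSum Finset.univ w, ae_all_iff.2 hw, hsum]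
    with x hwsum hwx hΦx
  simp only [hwsum, hwx, ← Finset.sum_mul, ← Complex.ofReal_sum, hΦx, Complex.ofReal_one, one_mul]

theorem sum_norm_sq_le_of_ae_le {F : Type*} [NormedAddCommGroup F] (f : ι → Lp F 2 μ)
    (g : Lp F 2 μ) (C : ℝ) (h : ∀ᵐ x ∂μ, ∑ i, ‖f i x‖ ^ 2 ≤ C * ‖g x‖ ^ 2) :
    ∑ i, ‖f i‖ ^ 2 ≤ C * ‖g‖ ^ 2 := by
  have hint (f : Lp F 2 μ) : Integrable (fun x => ‖f x‖ ^ 2) μ :=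
    (Lp.memLp f).integrable_norm_pow two_ne_zero
  simp only [Lp.norm_sq_eq_integral_norm_sq]
  rw [← integral_finsetSum _ fun i _ => hint (f i), ← integral_const_mul]
  exact integral_mono_ae (integrable_finsetSum _ fun i _ => hint (f i)) ((hint g).const_mul C) h

theorem sum_norm_sq_le_of_overlap_le {Φ : ι → Ω → ℝ} (h0 : ∀ j x, 0 ≤ Φ j x)
    (h1 : ∀ j x, Φ j x ≤ 1) {Ωs : ι → Set Ω} (hsupp : ∀ j, ∀ᵐ x ∂μ, x ∉ Ωs j → Φ j x = 0)
    {r : ℝ} (hoverlap : ∀ᵐ x ∂μ, ∑ j, (Ωs j).indicator (fun _ => (1 : ℝ)) x ≤ r)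
    {u : Lp ℂ 2 μ} {w : ι → Lp ℂ 2 μ} (hw : ∀ j, w j =ᵐ[μ] fun x => (Φ j x : ℂ) * u x) :
    ∑ j, ‖w j‖ ^ 2 ≤ r * ‖u‖ ^ 2 := by
  apply sum_norm_sq_le_of_ae_le
  filter_upwards [ae_all_iff.2 hw, ae_all_iff.2 hsupp, hoverlap] with x hwx hsuppx hoverlapx
  calc ∑ j, ‖w j x‖ ^ 2 = ∑ j, Φ j x ^ 2 * ‖u x‖ ^ 2 := by
        simp only [hwx, norm_mul, mul_pow, Complex.norm_real, Real.norm_eq_abs, sq_abs]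
    _ ≤ ∑ j, (Ωs j).indicator (fun _ => (1 : ℝ)) x * ‖u x‖ ^ 2 := by
        gcongr with j
        exact sq_le_indicator_one (h0 j x) (h1 j x) (hsuppx j)
    _ = (∑ j, (Ωs j).indicator (fun _ => (1 : ℝ)) x) * ‖u x‖ ^ 2 := Finset.sum_mul .. |>.symm
    _ ≤ r * ‖u x‖ ^ 2 := by gcongr

end MeasureTheory.Lp

section OrthogonalProjection

variable {𝕜 E : Type*} [RCLike 𝕜] [NormedAddCommGroup E] [InnerProductSpace 𝕜 E]

/-- Unlike `Submodule.starProjection`, this needs no completeness of `K`. -/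
def IsOrthogonalProjection (K : Submodule 𝕜 E) (P : E → E) : Prop :=
  (∀ f, P f ∈ K) ∧ ∀ f, ∀ g ∈ K, inner 𝕜 (P f) g = inner 𝕜 f g

variable {K : Submodule 𝕜 E} {P : E → E}

theorem IsOrthogonalProjection.map_eq_self (hP : IsOrthogonalProjection K P) {v : E}
    (hv : v ∈ K) : P v = v := by
  have hself : inner 𝕜 (P v - v) (P v - v) = 0 := by
    rw [inner_sub_left, hP.2 v _ (K.sub_mem (hP.1 v) hv), sub_self]
  rwa [inner_self_eq_zero, sub_eq_zero] at hself

theorem IsOrthogonalProjection.norm_map_le (hP : IsOrthogonalProjection K P) (f : E) :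
    ‖P f‖ ≤ ‖f‖ := by
  have hsq : ‖P f‖ ^ 2 ≤ ‖f‖ * ‖P f‖ := by
    rw [@norm_sq_eq_re_inner 𝕜, hP.2 f _ (hP.1 f)]
    exact re_inner_le_norm f (P f)
  rcases (norm_nonneg (P f)).eq_or_lt with h | h
  · exact h ▸ norm_nonneg f
  · nlinarith

end OrthogonalProjection

theorem stmt_7_general
    {Ω : Type*} [MeasurableSpace Ω] (μ : Measure Ω)
    (J : ℕ)
    (Φ : Fin J → Ω → ℝ)
    (h0 : ∀ j x, 0 ≤ Φ j x) (h1 : ∀ j x, Φ j x ≤ 1)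
    (hsum : ∀ᵐ x ∂μ, ∑ j, Φ j x = 1)
    (Ωs : Fin J → Set Ω)
    (hsupp : ∀ j, ∀ᵐ x ∂μ, x ∉ Ωs j → Φ j x = 0)
    (r : ℕ)
    (hoverlap : ∀ᵐ x ∂μ, ∑ j, (Ωs j).indicator (fun _ => (1 : ℝ)) x ≤ (r : ℝ))
    (S : Submodule ℂ (Lp ℂ 2 μ))
    (P : Lp ℂ 2 μ →L[ℂ] Lp ℂ 2 μ)
    (hPmem : ∀ f, P f ∈ S)
    (hPproj : ∀ f, ∀ g ∈ S, (inner ℂ (P f) g : ℂ) = inner ℂ f g)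
    (u : Lp ℂ 2 μ) (hu : u ∈ S)
    (w : Fin J → Lp ℂ 2 μ)
    (hw : ∀ j, (w j : Ω → ℂ) =ᵐ[μ] fun x => (Φ j x : ℂ) * u x) :
    (∑ j, P (w j)) = u ∧ ∑ j, ‖P (w j)‖ ^ 2 ≤ (r : ℝ) * ‖u‖ ^ 2 := by
  have hP : IsOrthogonalProjection S P := ⟨hPmem, hPproj⟩
  have hdecomp : ∑ j, P (w j) = u := by
    rw [← map_sum, Lp.sum_eq_of_ae_sum_eq_one hsum hw, hP.map_eq_self hu]
  refine ⟨hdecomp, ?_⟩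
  calc ∑ j, ‖P (w j)‖ ^ 2 ≤ ∑ j, ‖w j‖ ^ 2 := by
        gcongr with j
        exact hP.norm_map_le (w j)
    _ ≤ r * ‖u‖ ^ 2 := Lp.sum_norm_sq_le_of_overlap_le h0 h1 hsupp hoverlap hw

/-- Stable decomposition for the `L²` field variables: given a measurable
partition of unity `Φ j` subordinate to sets `Ω j` with finite overlap `r`,
a closed subspace `S` of `L²(μ)` with orthogonal projection `P`, and `u ∈ S`,
the pieces `u_j := P (Φ_j · u)` satisfy `∑ j, u_j = u` and
`∑ j, ‖u_j‖² ≤ r ‖u‖²`. -/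
theorem stmt_7
    {Ω : Type*} [MeasurableSpace Ω] (μ : Measure Ω)
    (J : ℕ) (hJ : 0 < J)
    (Φ : Fin J → Ω → ℝ) (hmeas : ∀ j, Measurable (Φ j))
    (h0 : ∀ j x, 0 ≤ Φ j x) (h1 : ∀ j x, Φ j x ≤ 1)
    (hsum : ∀ᵐ x ∂μ, ∑ j, Φ j x = 1)
    (Ωs : Fin J → Set Ω) (hΩmeas : ∀ j, MeasurableSet (Ωs j))
    (hsupp : ∀ j, ∀ᵐ x ∂μ, x ∉ Ωs j → Φ j x = 0)
    (r : ℕ) (hr : 0 < r)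
    (hoverlap : ∀ᵐ x ∂μ, ∑ j, (Ωs j).indicator (fun _ => (1 : ℝ)) x ≤ (r : ℝ))
    (S : Submodule ℂ (Lp ℂ 2 μ)) (hS : IsClosed ((S : Set (Lp ℂ 2 μ))))
    (P : Lp ℂ 2 μ →L[ℂ] Lp ℂ 2 μ)
    (hPmem : ∀ f, P f ∈ S)
    (hPproj : ∀ f, ∀ g ∈ S, (inner ℂ (P f) g : ℂ) = inner ℂ f g)
    (u : Lp ℂ 2 μ) (hu : u ∈ S)
    (w : Fin J → Lp ℂ 2 μ)
    (hw : ∀ j, (w j : Ω → ℂ) =ᵐ[μ] fun x => (Φ j x : ℂ) * u x) :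
    (∑ j, P (w j)) = u ∧ ∑ j, ‖P (w j)‖ ^ 2 ≤ (r : ℝ) * ‖u‖ ^ 2 :=
  stmt_7_general μ J Φ h0 h1 hsum Ωs hsupp r hoverlap S P hPmem hPproj u hu w hw
end

section
/- Let Ω ⊆ ℝ^d be an open set, let ω ∈ ℝ, δ > 0, and let Φ : Ω → ℝ be continuously differentiable with 0 ≤ Φ(x) ≤ 1 and |∇Φ(x)| ≤ δ^{-1} for all x ∈ Ω. Let p : Ω → ℂ and u : Ω → ℂ^d be continuously differentiable. Then ∫_Ω ( |iω Φ p + div(Φ u)|² + |iω Φ u + ∇(Φ p)|² ) dx ≤ 2 ∫_Ω ( |iω p + div u|² + |iω u + ∇ p|² ) dx + 2 δ^{-2} ∫_Ω ( |u|² + |p|² ) dx, where the integrals are Lebesgue integrals of nonnegative functions (possibly infinite). -/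
open MeasureTheory

/-- Partial derivative in the `k`-th coordinate direction of a complex-valued
function on `ℝ^d`. -/
noncomputable def pderivC {d : ℕ} (f : (Fin d → ℝ) → ℂ) (k : Fin d)
    (x : Fin d → ℝ) : ℂ :=
  fderiv ℝ f x (Pi.single k 1)

/-- Partial derivative in the `k`-th coordinate direction of a real-valued
function on `ℝ^d`. -/
noncomputable def pderivR {d : ℕ} (f : (Fin d → ℝ) → ℝ) (k : Fin d)
    (x : Fin d → ℝ) : ℝ :=
  fderiv ℝ f x (Pi.single k 1)

/-- Divergence of a complex vector field on `ℝ^d`. -/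
noncomputable def divC {d : ℕ} (u : (Fin d → ℝ) → (Fin d → ℂ))
    (x : Fin d → ℝ) : ℂ :=
  ∑ k, pderivC (fun y => u y k) k x

/-! By the Leibniz rule, `𝒜(Φp, Φu) = Φ 𝒜(p,u) + (∇Φ · u, p ∇Φ)`. Pointwise on `Ω`, `|Φ| ≤ 1`,
`|a + b|² ≤ 2|a|² + 2|b|²` and Cauchy–Schwarz `|∇Φ · u| ≤ |∇Φ| |u|` bound the square of this by
`2 |𝒜(p,u)|² + 2 |∇Φ|² (|u|² + |p|²)`; integrating gives the estimate. -/

theorem pderivC_ofReal_mul {d : ℕ} {Φ : (Fin d → ℝ) → ℝ} {f : (Fin d → ℝ) → ℂ}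
    {x : Fin d → ℝ} (hΦ : DifferentiableAt ℝ Φ x) (hf : DifferentiableAt ℝ f x) (k : Fin d) :
    pderivC (fun y => (Φ y : ℂ) * f y) k x = Φ x * pderivC f k x + pderivR Φ k x * f x := by
  simp only [pderivC, pderivR, ← Complex.real_smul, fderiv_fun_smul hΦ hf]
  simp [Complex.real_smul]

theorem divC_ofReal_mul {d : ℕ} {Φ : (Fin d → ℝ) → ℝ} {u : (Fin d → ℝ) → (Fin d → ℂ)}
    {x : Fin d → ℝ} (hΦ : DifferentiableAt ℝ Φ x)
    (hu : ∀ k, DifferentiableAt ℝ (fun y => u y k) x) :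
    divC (fun y k => (Φ y : ℂ) * u y k) x = Φ x * divC u x + ∑ k, pderivR Φ k x * u x k := by
  simp only [divC, pderivC_ofReal_mul hΦ (hu _), Finset.sum_add_distrib, Finset.mul_sum]

theorem norm_add_sq_le_two_mul {E : Type*} [SeminormedAddCommGroup E] (a b : E) :
    ‖a + b‖ ^ 2 ≤ 2 * (‖a‖ ^ 2 + ‖b‖ ^ 2) :=
  (pow_le_pow_left₀ (norm_nonneg _) (norm_add_le a b) 2).trans add_sq_le

theorem norm_sum_ofReal_mul_sq_le {ι : Type*} (s : Finset ι) (g : ι → ℝ) (v : ι → ℂ) :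
    ‖∑ i ∈ s, (g i : ℂ) * v i‖ ^ 2 ≤ (∑ i ∈ s, g i ^ 2) * ∑ i ∈ s, ‖v i‖ ^ 2 := by
  have h : ‖∑ i ∈ s, (g i : ℂ) * v i‖ ≤ ∑ i ∈ s, |g i| * ‖v i‖ :=
    (norm_sum_le _ _).trans_eq (by simp)
  calc ‖∑ i ∈ s, (g i : ℂ) * v i‖ ^ 2 ≤ (∑ i ∈ s, |g i| * ‖v i‖) ^ 2 :=
        pow_le_pow_left₀ (norm_nonneg _) h 2
    _ ≤ (∑ i ∈ s, |g i| ^ 2) * ∑ i ∈ s, ‖v i‖ ^ 2 := Finset.sum_mul_sq_le_sq_mul_sq _ _ _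
    _ = (∑ i ∈ s, g i ^ 2) * ∑ i ∈ s, ‖v i‖ ^ 2 := by simp only [sq_abs]

theorem norm_ofReal_mul_le_of_abs_le_one {φ : ℝ} (hφ : |φ| ≤ 1) (z : ℂ) : ‖(φ : ℂ) * z‖ ≤ ‖z‖ := by
  rw [norm_mul, Complex.norm_real, Real.norm_eq_abs]
  exact mul_le_of_le_one_left (norm_nonneg z) hφ

theorem norm_sq_cutoff_commutator_le {ι : Type*} [Fintype ι] {φ : ℝ} (hφ : |φ| ≤ 1) (g : ι → ℝ)
    (a b : ℂ) (v w : ι → ℂ) :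
    ‖φ * a + ∑ i, g i * v i‖ ^ 2 + ∑ i, ‖φ * w i + g i * b‖ ^ 2 ≤
      2 * (‖a‖ ^ 2 + ∑ i, ‖w i‖ ^ 2) + 2 * (∑ i, g i ^ 2) * (∑ i, ‖v i‖ ^ 2 + ‖b‖ ^ 2) := by
  have h₁ : ‖φ * a + ∑ i, g i * v i‖ ^ 2 ≤ 2 * (‖a‖ ^ 2 + (∑ i, g i ^ 2) * ∑ i, ‖v i‖ ^ 2) :=
    (norm_add_sq_le_two_mul _ _).trans <| by
      gcongr
      · exact norm_ofReal_mul_le_of_abs_le_one hφ a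
      · exact norm_sum_ofReal_mul_sq_le _ _ _
  have h₂ : ∀ i, ‖φ * w i + g i * b‖ ^ 2 ≤ 2 * (‖w i‖ ^ 2 + g i ^ 2 * ‖b‖ ^ 2) := fun i =>
    (norm_add_sq_le_two_mul _ _).trans <| by
      rw [norm_mul (g i : ℂ), mul_pow, Complex.norm_real, Real.norm_eq_abs, sq_abs]
      gcongr
      exact norm_ofReal_mul_le_of_abs_le_one hφ _
  have h₃ := Finset.sum_le_sum fun i (_ : i ∈ Finset.univ) => h₂ i
  simp only [← Finset.mul_sum, Finset.sum_add_distrib, ← Finset.sum_mul] at h₃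
  linarith

theorem setLIntegral_ofReal_le_add {α : Type*} [MeasurableSpace α] {μ : Measure α} {s : Set α}
    (hs : MeasurableSet s) {F G H : α → ℝ} {a b : ℝ} (ha : 0 ≤ a) (hb : 0 ≤ b)
    (hH : AEMeasurable H (μ.restrict s)) (hle : ∀ x ∈ s, F x ≤ a * G x + b * H x) :
    ∫⁻ x in s, ENNReal.ofReal (F x) ∂μ ≤
      ENNReal.ofReal a * ∫⁻ x in s, ENNReal.ofReal (G x) ∂μ +
        ENNReal.ofReal b * ∫⁻ x in s, ENNReal.ofReal (H x) ∂μ := by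
  calc ∫⁻ x in s, ENNReal.ofReal (F x) ∂μ
      ≤ ∫⁻ x in s, ENNReal.ofReal a * ENNReal.ofReal (G x) +
          ENNReal.ofReal b * ENNReal.ofReal (H x) ∂μ := by
        refine setLIntegral_mono' hs fun x hx => ?_
        rw [← ENNReal.ofReal_mul ha, ← ENNReal.ofReal_mul hb]
        exact (ENNReal.ofReal_le_ofReal (hle x hx)).trans ENNReal.ofReal_add_le
    _ = _ := by
        rw [lintegral_add_right' _ (hH.ennreal_ofReal.const_mul _),
          lintegral_const_mul' _ _ ENNReal.ofReal_ne_top,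
          lintegral_const_mul' _ _ ENNReal.ofReal_ne_top]

theorem stmt_8_general (d : ℕ) (Ω : Set (Fin d → ℝ)) (hΩ : IsOpen Ω)
    (ω δ : ℝ)
    (Φ : (Fin d → ℝ) → ℝ) (hΦreg : ContDiffOn ℝ 1 Φ Ω)
    (hΦ0 : ∀ x ∈ Ω, 0 ≤ Φ x) (hΦ1 : ∀ x ∈ Ω, Φ x ≤ 1)
    (hΦgrad : ∀ x ∈ Ω, Real.sqrt (∑ k, (pderivR Φ k x) ^ 2) ≤ δ⁻¹)
    (p : (Fin d → ℝ) → ℂ) (hp : ContDiffOn ℝ 1 p Ω)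
    (u : (Fin d → ℝ) → (Fin d → ℂ)) (hu : ∀ k, ContDiffOn ℝ 1 (fun x => u x k) Ω) :
    (∫⁻ x in Ω, ENNReal.ofReal
        (‖Complex.I * (ω : ℂ) * ((Φ x : ℂ) * p x) +
            divC (fun y k => (Φ y : ℂ) * u y k) x‖ ^ 2 +
          ∑ k, ‖Complex.I * (ω : ℂ) * ((Φ x : ℂ) * u x k) +
            pderivC (fun y => (Φ y : ℂ) * p y) k x‖ ^ 2)) ≤
    2 * (∫⁻ x in Ω, ENNReal.ofReal
        (‖Complex.I * (ω : ℂ) * p x + divC u x‖ ^ 2 +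
          ∑ k, ‖Complex.I * (ω : ℂ) * u x k + pderivC p k x‖ ^ 2)) +
    ENNReal.ofReal (2 / δ ^ 2) * (∫⁻ x in Ω, ENNReal.ofReal
        ((∑ k, ‖u x k‖ ^ 2) + ‖p x‖ ^ 2)) := by
  rw [← ENNReal.ofReal_ofNat 2]
  refine setLIntegral_ofReal_le_add hΩ.measurableSet zero_le_two (by positivity) ?_ fun x hx => ?_
  · have hcont : ContinuousOn (fun x => (∑ k, ‖u x k‖ ^ 2) + ‖p x‖ ^ 2) Ω :=
      (continuousOn_finsetSum _ fun k _ => ((hu k).continuousOn.norm.pow 2)).add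
        (hp.continuousOn.norm.pow 2)
    exact hcont.aemeasurable hΩ.measurableSet
  have hdiff {E : Type} [NormedAddCommGroup E] [NormedSpace ℝ E] {f : (Fin d → ℝ) → E}
      (hf : ContDiffOn ℝ 1 f Ω) : DifferentiableAt ℝ f x :=
    (hf.differentiableOn one_ne_zero).differentiableAt (hΩ.mem_nhds hx)
  have hΦx : DifferentiableAt ℝ Φ x := hdiff hΦreg
  have hφ : |Φ x| ≤ 1 := abs_le.2 ⟨by linarith [hΦ0 x hx], hΦ1 x hx⟩
  have hgrad : 2 * ∑ k, pderivR Φ k x ^ 2 ≤ 2 / δ ^ 2 := by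
    rw [div_eq_mul_inv, ← inv_pow]
    exact mul_le_mul_of_nonneg_left (Real.sqrt_le_iff.1 (hΦgrad x hx)).2 zero_le_two
  rw [divC_ofReal_mul hΦx fun k => hdiff (hu k)]
  simp only [pderivC_ofReal_mul hΦx (hdiff hp)]
  calc _ = ‖Φ x * (Complex.I * ω * p x + divC u x) + ∑ k, pderivR Φ k x * u x k‖ ^ 2 +
        ∑ k, ‖Φ x * (Complex.I * ω * u x k + pderivC p k x) + pderivR Φ k x * p x‖ ^ 2 := by
        congr 1
        · congr 2; ring
        · exact Finset.sum_congr rfl fun k _ => by ring_nf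
    _ ≤ _ := norm_sq_cutoff_commutator_le hφ _ _ _ _ _
    _ ≤ _ := by gcongr

/-- Commutator/cutoff estimate for the time-harmonic acoustics operator:
`‖𝒜(Φp, Φu)‖²_{L²(Ω)} ≤ 2 ‖𝒜(p,u)‖²_{L²(Ω)} + 2 δ⁻² ‖(p,u)‖²_{L²(Ω)}`, where
`𝒜(p,u) = (iωp + div u, iωu + ∇p)` and `Φ` is a cutoff with `0 ≤ Φ ≤ 1` and
`|∇Φ| ≤ δ⁻¹` on `Ω`. -/
theorem stmt_8 (d : ℕ) (Ω : Set (Fin d → ℝ)) (hΩ : IsOpen Ω)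
    (ω δ : ℝ) (hδ : 0 < δ)
    (Φ : (Fin d → ℝ) → ℝ) (hΦreg : ContDiffOn ℝ 1 Φ Ω)
    (hΦ0 : ∀ x ∈ Ω, 0 ≤ Φ x) (hΦ1 : ∀ x ∈ Ω, Φ x ≤ 1)
    (hΦgrad : ∀ x ∈ Ω, Real.sqrt (∑ k, (pderivR Φ k x) ^ 2) ≤ δ⁻¹)
    (p : (Fin d → ℝ) → ℂ) (hp : ContDiffOn ℝ 1 p Ω)
    (u : (Fin d → ℝ) → (Fin d → ℂ)) (hu : ∀ k, ContDiffOn ℝ 1 (fun x => u x k) Ω) :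
    (∫⁻ x in Ω, ENNReal.ofReal
        (‖Complex.I * (ω : ℂ) * ((Φ x : ℂ) * p x) +
            divC (fun y k => (Φ y : ℂ) * u y k) x‖ ^ 2 +
          ∑ k, ‖Complex.I * (ω : ℂ) * ((Φ x : ℂ) * u x k) +
            pderivC (fun y => (Φ y : ℂ) * p y) k x‖ ^ 2)) ≤
    2 * (∫⁻ x in Ω, ENNReal.ofReal
        (‖Complex.I * (ω : ℂ) * p x + divC u x‖ ^ 2 +
          ∑ k, ‖Complex.I * (ω : ℂ) * u x k + pderivC p k x‖ ^ 2)) +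
    ENNReal.ofReal (2 / δ ^ 2) * (∫⁻ x in Ω, ENNReal.ofReal
        ((∑ k, ‖u x k‖ ^ 2) + ‖p x‖ ^ 2)) :=
  stmt_8_general d Ω hΩ ω δ Φ hΦreg hΦ0 hΦ1 hΦgrad p hp u hu
end

section
/- Let U be a complex vector space, V a complex Hilbert space, B : U → V* a linear map with b(u, v) := (B u)(v), R_V : V → V* the Riesz map, and l ∈ V*. Let U_h be a subspace of U. Then for u_h ∈ U_h and ψ ∈ V, the pair (u_h, ψ) satisfies the mixed system ⟪ψ, v⟫_V + b(u_h, v) = l(v) for all v ∈ V and b(w_h, ψ) = 0 for all w_h ∈ U_h, if and only if ψ = R_V^{-1}(l − B u_h) and ⟪R_V^{-1}(l − B u_h), R_V^{-1} B δu_h⟫_V = 0 for all δu_h ∈ U_h. -/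
open InnerProductSpace

section Riesz

variable {𝕜 V : Type*} [RCLike 𝕜] [NormedAddCommGroup V] [InnerProductSpace 𝕜 V] [CompleteSpace V]

theorem eq_toDual_symm_iff_forall_inner (ψ : V) (f : StrongDual 𝕜 V) :
    ψ = (toDual 𝕜 V).symm f ↔ ∀ v, inner 𝕜 ψ v = f v := by
  rw [eq_comm, LinearIsometryEquiv.symm_apply_eq, ContinuousLinearMap.ext_iff]
  simp only [toDual_apply_apply, eq_comm]

theorem forall_inner_add_eq_iff_eq_toDual_symm (ψ : V) (f l : StrongDual 𝕜 V) :
    (∀ v, inner 𝕜 ψ v + f v = l v) ↔ ψ = (toDual 𝕜 V).symm (l - f) := by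
  simp only [eq_toDual_symm_iff_forall_inner, sub_apply, eq_sub_iff_add_eq]

theorem apply_eq_zero_iff_inner_toDual_symm (f : StrongDual 𝕜 V) (ψ : V) :
    f ψ = 0 ↔ inner 𝕜 ψ ((toDual 𝕜 V).symm f) = 0 := by
  rw [inner_eq_zero_symm, toDual_symm_apply]

end Riesz

theorem stmt_12_general
    {U : Type*} [AddCommGroup U] [Module ℂ U]
    {V : Type*} [NormedAddCommGroup V] [InnerProductSpace ℂ V] [CompleteSpace V]
    (B : U →ₗ[ℂ] StrongDual ℂ V) (l : StrongDual ℂ V)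
    (Uh : Submodule ℂ U) (uh : U) (ψ : V) :
    ((∀ v : V, (inner ℂ ψ v : ℂ) + B uh v = l v) ∧ (∀ wh ∈ Uh, B wh ψ = 0)) ↔
      (ψ = (InnerProductSpace.toDual ℂ V).symm (l - B uh) ∧
        ∀ δuh ∈ Uh,
          (inner ℂ ((InnerProductSpace.toDual ℂ V).symm (l - B uh))
            ((InnerProductSpace.toDual ℂ V).symm (B δuh)) : ℂ) = 0) := by
  rw [forall_inner_add_eq_iff_eq_toDual_symm]
  refine and_congr_right fun hψ => ?_
  subst hψ
  simp only [apply_eq_zero_iff_inner_toDual_symm]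

/-- Equivalence of the mixed (saddle-point) formulation of the DPG method with
the normal-equations characterization: `(u_h, ψ)` solves
`⟪ψ, v⟫_V + b(u_h, v) = l(v)` for all `v ∈ V` and `b(w_h, ψ) = 0` for all
`w_h ∈ U_h` iff `ψ = R_V⁻¹(l − B u_h)` and
`⟪R_V⁻¹(l − B u_h), R_V⁻¹ B δu_h⟫_V = 0` for all `δu_h ∈ U_h`. -/
theorem stmt_12
    {U : Type*} [AddCommGroup U] [Module ℂ U]
    {V : Type*} [NormedAddCommGroup V] [InnerProductSpace ℂ V] [CompleteSpace V]
    (B : U →ₗ[ℂ] StrongDual ℂ V) (l : StrongDual ℂ V)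
    (Uh : Submodule ℂ U) (uh : U) (huh : uh ∈ Uh) (ψ : V) :
    ((∀ v : V, (inner ℂ ψ v : ℂ) + B uh v = l v) ∧ (∀ wh ∈ Uh, B wh ψ = 0)) ↔
      (ψ = (InnerProductSpace.toDual ℂ V).symm (l - B uh) ∧
        ∀ δuh ∈ Uh,
          (inner ℂ ((InnerProductSpace.toDual ℂ V).symm (l - B uh))
            ((InnerProductSpace.toDual ℂ V).symm (B δuh)) : ℂ) = 0) :=
  stmt_12_general B l Uh uh ψ
end
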